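/- Let V⁰, V¹ ∈ ℝ with V¹ − V⁰ = O(Δtʳ), let (ηᵐ) satisfy ηᵐ = 1 + O(Δtʳ), and define V̄^{m+1} by (3/2)V̄^{m+1} = 2Vᵐ − (1/2)V^{m−1} (so that V̄^{m+1} − Vᵐ = (1/3)(Vᵐ − V^{m−1})) and V^{m+1} = (η^{m+1})³ V̄^{m+1}. Then by induction V^{m+1} − Vᵐ = O(Δtʳ) for every fixed m as Δt → 0. -/

import Mathlib

/-!
Along `Δt → 0⁺`, one step of the scheme has increment
`V^{m+2} - V^{m+1} = ((η^{m+2})³ - 1) (V^{m+1} + (V^{m+1} - V^m) / 3) + (V^{m+1} - V^m) / 3`,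
and `η³ - 1 = (η - 1)(η² + η + 1) = O(Δtʳ)` because `η` stays bounded. An induction on `m` that
carries both `V^{m+1} - V^m = O(Δtʳ)` and `V^{m+1} = O(1)` then closes.
-/

open Asymptotics Filter Topology

namespace Asymptotics

variable {α R : Type*} {l : Filter α} {g : α → ℝ}

theorem isBigO_of_forall_mem_abs_le {f : α → ℝ} {s : Set α} (hs : s ∈ l)
    (hg : ∀ x ∈ s, 0 ≤ g x) (h : ∃ C, ∀ x ∈ s, |f x| ≤ C * g x) : f =O[l] g := by
  obtain ⟨C, hC⟩ := h
  refine IsBigO.of_bound C (mem_of_superset hs fun x hx => ?_)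
  simpa [Real.norm_eq_abs, abs_of_nonneg (hg x hx)] using hC x hx

theorem IsBigO.pow_sub_one [SeminormedRing R] {η : α → R} (hη : (fun x => η x - 1) =O[l] g)
    (hg : g =O[l] (fun _ => (1 : ℝ))) (n : ℕ) : (fun x => η x ^ n - 1) =O[l] g := by
  have hη_one : η =O[l] (fun _ => (1 : ℝ)) := by
    simpa using (hη.trans hg).add (isBigO_const_const (1 : R) one_ne_zero l)
  have hsum : (fun x => ∑ i ∈ Finset.range n, η x ^ i) =O[l] (fun _ => (1 : ℝ)) := by
    refine IsBigO.sum (s := Finset.range n) (A := fun i x => η x ^ i) (fun i _ => ?_)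
    |>.congr_left (fun x => by simp [Finset.sum_apply])
    simpa only [Pi.one_apply, one_pow] using hη_one.pow i
  simpa [geom_sum_mul] using hsum.mul hη

end Asymptotics

theorem exists_pos_forall_abs_le_of_isBigO_nhdsGT {f g : ℝ → ℝ} {a : ℝ} (h : f =O[𝓝[>] a] g) :
    ∃ C > 0, ∃ δ > 0, ∀ x, a < x → x < a + δ → |f x| ≤ C * |g x| := by
  obtain ⟨C, hC, hfg⟩ := h.exists_pos
  obtain ⟨u, hau, hu⟩ := mem_nhdsGT_iff_exists_Ioo_subset.1 hfg.bound
  refine ⟨C, hC, u - a, sub_pos.2 hau, fun x hax hxu => ?_⟩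
  exact hu ⟨hax, by linarith⟩

section SAVBDF2

variable {α : Type*} {l : Filter α} {g : α → ℝ}

theorem isBigO_sav_bdf2_step {a b e : α → ℝ} (hg : g =O[l] (fun _ => (1 : ℝ)))
    (ha : a =O[l] (fun _ => (1 : ℝ))) (hab : (fun x => a x - b x) =O[l] g)
    (he : (fun x => e x - 1) =O[l] g) :
    (fun x => e x ^ 3 * (4 / 3 * a x - 1 / 3 * b x) - a x) =O[l] g := by
  have hsplit : ∀ x, (e x ^ 3 - 1) * (a x + 3⁻¹ * (a x - b x)) + 3⁻¹ * (a x - b x) =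
      e x ^ 3 * (4 / 3 * a x - 1 / 3 * b x) - a x := fun x => by ring
  have hbar : (fun x => a x + 3⁻¹ * (a x - b x)) =O[l] (fun _ => (1 : ℝ)) :=
    ha.add ((hab.trans hg).const_mul_left 3⁻¹)
  refine (IsBigO.add ?_ (hab.const_mul_left 3⁻¹)).congr_left hsplit
  simpa only [mul_one] using (he.pow_sub_one hg 3).mul hbar

theorem isBigO_sav_bdf2_sub {V η : α → ℕ → ℝ} (hg : g =O[l] (fun _ => (1 : ℝ)))
    (hV0 : (fun x => V x 0) =O[l] (fun _ => (1 : ℝ)))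
    (hinit : (fun x => V x 1 - V x 0) =O[l] g) (hη : ∀ m, (fun x => η x m - 1) =O[l] g)
    (hrec : ∀ m, ∀ᶠ x in l,
      V x (m + 2) = η x (m + 2) ^ 3 * (4 / 3 * V x (m + 1) - 1 / 3 * V x m))
    (m : ℕ) : (fun x => V x (m + 1) - V x m) =O[l] g := by
  suffices h : ∀ m, (fun x => V x (m + 1) - V x m) =O[l] g ∧
      (fun x => V x (m + 1)) =O[l] (fun _ => (1 : ℝ)) from (h m).1
  intro m
  induction m with
  | zero => exact ⟨hinit, by simpa using (hinit.trans hg).add hV0⟩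
  | succ m ih =>
    obtain ⟨hinc, hbdd⟩ := ih
    have hinc' : (fun x => V x (m + 2) - V x (m + 1)) =O[l] g :=
      (isBigO_sav_bdf2_step hg hbdd hinc (hη (m + 2))).congr'
        ((hrec m).mono fun x hx => congrArg (· - V x (m + 1)) hx.symm) EventuallyEq.rfl
    exact ⟨hinc', by simpa using (hinc'.trans hg).add hbdd⟩

end SAVBDF2

theorem approx_volume_conservation_bdf2_general
    (r : ℕ)
    (V0 : ℝ)
    (V : ℝ → ℕ → ℝ) (η : ℝ → ℕ → ℝ)
    (hV0 : ∀ Δt, V Δt 0 = V0)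
    (hinit : ∃ C : ℝ, ∀ Δt : ℝ, 0 < Δt → |V Δt 1 - V Δt 0| ≤ C * Δt ^ r)
    (hη : ∃ C : ℝ, ∀ Δt : ℝ, 0 < Δt → ∀ m : ℕ, |η Δt m - 1| ≤ C * Δt ^ r)
    (hrec : ∀ Δt : ℝ, 0 < Δt → ∀ m : ℕ,
      V Δt (m + 2) =
        (η Δt (m + 2)) ^ 3 * ((4 / 3) * V Δt (m + 1) - (1 / 3) * V Δt m))
    (m : ℕ) :
    ∃ C' > 0, ∃ δ > 0, ∀ Δt : ℝ, 0 < Δt → Δt < δ →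
      |V Δt (m + 1) - V Δt m| ≤ C' * Δt ^ r := by
  have hpow_nonneg : ∀ Δt ∈ Set.Ioi (0 : ℝ), 0 ≤ Δt ^ r := fun Δt hΔt => pow_nonneg hΔt.le r
  have hpow_bdd : (fun Δt : ℝ => Δt ^ r) =O[𝓝[>] 0] (fun _ => (1 : ℝ)) :=
    (((continuous_pow r).tendsto 0).mono_left nhdsWithin_le_nhds).isBigO_one ℝ
  have hV0' : (fun Δt => V Δt 0) =O[𝓝[>] 0] (fun _ => (1 : ℝ)) := by
    simpa only [hV0] using isBigO_const_const V0 one_ne_zero _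
  have hinit' : (fun Δt => V Δt 1 - V Δt 0) =O[𝓝[>] 0] (fun Δt : ℝ => Δt ^ r) :=
    isBigO_of_forall_mem_abs_le self_mem_nhdsWithin hpow_nonneg hinit
  have hη' : ∀ n, (fun Δt => η Δt n - 1) =O[𝓝[>] 0] (fun Δt : ℝ => Δt ^ r) := fun n =>
    let ⟨C, hC⟩ := hη
    isBigO_of_forall_mem_abs_le self_mem_nhdsWithin hpow_nonneg ⟨C, fun Δt hΔt => hC Δt hΔt n⟩
  have hrec' : ∀ n, ∀ᶠ Δt in 𝓝[>] 0, V Δt (n + 2) =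
      η Δt (n + 2) ^ 3 * (4 / 3 * V Δt (n + 1) - 1 / 3 * V Δt n) := fun n =>
    eventually_nhdsWithin_of_forall fun Δt hΔt => hrec Δt hΔt n
  obtain ⟨C, hC, δ, hδ, hbound⟩ := exists_pos_forall_abs_le_of_isBigO_nhdsGT
    (isBigO_sav_bdf2_sub hpow_bdd hV0' hinit' hη' hrec' m)
  refine ⟨C, hC, δ, hδ, fun Δt hΔt hΔtδ => ?_⟩
  simpa only [abs_of_pos (pow_pos hΔt r)] using hbound Δt hΔt (by simpa using hΔtδ)

/-- Approximate volume conservation for the LM-SAV-MD-BDF2 method. -/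
theorem approx_volume_conservation_bdf2
    (r : ℕ) (hr : 1 ≤ r)
    (V0 : ℝ)
    (V : ℝ → ℕ → ℝ) (η : ℝ → ℕ → ℝ)
    (hV0 : ∀ Δt, V Δt 0 = V0)
    (hinit : ∃ C : ℝ, ∀ Δt : ℝ, 0 < Δt → |V Δt 1 - V Δt 0| ≤ C * Δt ^ r)
    (hη : ∃ C : ℝ, ∀ Δt : ℝ, 0 < Δt → ∀ m : ℕ, |η Δt m - 1| ≤ C * Δt ^ r)
    (hrec : ∀ Δt : ℝ, 0 < Δt → ∀ m : ℕ,
      V Δt (m + 2) =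
        (η Δt (m + 2)) ^ 3 * ((4 / 3) * V Δt (m + 1) - (1 / 3) * V Δt m))
    (m : ℕ) :
    ∃ C' > 0, ∃ δ > 0, ∀ Δt : ℝ, 0 < Δt → Δt < δ →
      |V Δt (m + 1) - V Δt m| ≤ C' * Δt ^ r :=
  approx_volume_conservation_bdf2_general r V0 V η hV0 hinit hη hrec m
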